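/- Contiguous relation IV: let q ∈ (0,1), n ≥ 0 an integer, and a, b real numbers with a q^j ≠ 1 for j = 1, …, n+1. Then the polynomial identity b q^{n+1}(1 − a q^{n+1}) · p_{n+1}(x; a, b) = (1 − a b q^{2n+2})(1 − q b x) · p_n(x; a, qb) − (1 − b q^{n+1}) · p_n(x; a, b) holds for all x. -/

import Mathlib

/-- The q-Pochhammer symbol `(a;q)_k = ∏_{j=0}^{k-1} (1 - a q^j)`. -/
noncomputable def qPoch (q a : ℝ) (k : ℕ) : ℝ :=
  ∏ j ∈ Finset.range k, (1 - a * q ^ j)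

/-- The little q-Jacobi polynomial
`p_n(x; a, b) = ∑_{k=0}^{n} [(q^{−n};q)_k (a b q^{n+1};q)_k / ((a q;q)_k (q;q)_k)] (q x)^k`. -/
noncomputable def littleQJacobi (q a b : ℝ) (n : ℕ) : Polynomial ℝ :=
  ∑ k ∈ Finset.range (n + 1),
    Polynomial.C (qPoch q (q ^ (-(n : ℤ))) k * qPoch q (a * b * q ^ (n + 1)) k /
      (qPoch q (a * q) k * qPoch q q k)) * (Polynomial.C q * Polynomial.X) ^ k

/-!
Both sides are polynomials in `y = q x` whose coefficients are terms of `₂φ₁` series, so we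
compare coefficients. The coefficient of `y ^ (j + 1)` in each of `p_{n+1}(x; a, b)`,
`p_n(x; a, qb)` and `p_n(x; a, b)` is the coefficient of `y ^ j` in `p_n(x; a, qb)` times a
ratio of Pochhammer factors, so the relation reduces to a rational identity in `a`, `b`, `q`,
`q ^ n` and `q ^ j`. Beyond degree `n + 1` everything vanishes because `(q^{-n}; q)_k = 0`
for `k > n`.
-/

open Finset Polynomial

section QPochhammer

variable (q : ℝ)

theorem qPoch_zero (a : ℝ) : qPoch q a 0 = 1 := prod_range_zero _

theorem qPoch_succ (a : ℝ) (k : ℕ) : qPoch q a (k + 1) = qPoch q a k * (1 - a * q ^ k) :=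
  prod_range_succ _ _

theorem qPoch_succ' (a : ℝ) (k : ℕ) : qPoch q a (k + 1) = (1 - a) * qPoch q (a * q) k := by
  rw [qPoch, prod_range_succ', pow_zero, mul_one, mul_comm, qPoch]
  exact congrArg _ (prod_congr rfl fun j _ => by ring)

theorem qPoch_inv_pow_eq_zero {q : ℝ} (hq : q ≠ 0) {n k : ℕ} (hnk : n < k) :
    qPoch q (q ^ n)⁻¹ k = 0 :=
  prod_eq_zero (mem_range.mpr hnk) (by rw [inv_mul_cancel₀ (pow_ne_zero n hq), sub_self])

end QPochhammer

/-- The coefficient of `z ^ k` in the basic hypergeometric series `₂φ₁(α, β; γ; q, z)`. -/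
noncomputable def qHypergeomCoeff (q α β γ : ℝ) (k : ℕ) : ℝ :=
  qPoch q α k * qPoch q β k / (qPoch q γ k * qPoch q q k)

section QHypergeomCoeff

variable (q α β γ : ℝ) (k : ℕ)

theorem qHypergeomCoeff_zero : qHypergeomCoeff q α β γ 0 = 1 := by
  simp [qHypergeomCoeff, qPoch_zero]

theorem qHypergeomCoeff_succ :
    qHypergeomCoeff q α β γ (k + 1) = qHypergeomCoeff q α β γ k *
      ((1 - α * q ^ k) * (1 - β * q ^ k) / ((1 - γ * q ^ k) * (1 - q * q ^ k))) := by
  rw [qHypergeomCoeff, qHypergeomCoeff, div_mul_div_comm, qPoch_succ, qPoch_succ, qPoch_succ,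
    qPoch_succ]
  ring

theorem qHypergeomCoeff_succ_of_mul_left :
    qHypergeomCoeff q α β γ (k + 1) = qHypergeomCoeff q (α * q) β γ k *
      ((1 - α) * (1 - β * q ^ k) / ((1 - γ * q ^ k) * (1 - q * q ^ k))) := by
  rw [qHypergeomCoeff, qHypergeomCoeff, div_mul_div_comm, qPoch_succ' q α, qPoch_succ q β,
    qPoch_succ q γ, qPoch_succ q q]
  ring

theorem qHypergeomCoeff_succ_of_mul_right :
    qHypergeomCoeff q α β γ (k + 1) = qHypergeomCoeff q α (β * q) γ k *
      ((1 - α * q ^ k) * (1 - β) / ((1 - γ * q ^ k) * (1 - q * q ^ k))) := by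
  rw [qHypergeomCoeff, qHypergeomCoeff, div_mul_div_comm, qPoch_succ q α, qPoch_succ' q β,
    qPoch_succ q γ, qPoch_succ q q]
  ring

end QHypergeomCoeff

section LittleQJacobi

variable {q : ℝ} (a b : ℝ) (n : ℕ)

theorem littleQJacobi_coeff (hq : q ≠ 0) (k : ℕ) :
    (littleQJacobi q a b n).coeff k =
      qHypergeomCoeff q (q ^ n)⁻¹ (a * b * q ^ (n + 1)) (a * q) k * q ^ k := by
  simp only [littleQJacobi, zpow_neg, zpow_natCast, mul_pow, ← C_pow, ← mul_assoc, ← C_mul,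
    finsetSum_coeff, coeff_C_mul_X_pow, sum_ite_eq, mem_range]
  split_ifs with hk
  · rfl
  · rw [qHypergeomCoeff, qPoch_inv_pow_eq_zero hq (by omega), zero_mul, zero_div, zero_mul]

theorem qHypergeomCoeff_contiguous (hq : q ≠ 0) (j : ℕ) (ha : 1 - a * q * q ^ j ≠ 0)
    (hq' : 1 - q * q ^ j ≠ 0) :
    b * q ^ (n + 1) * (1 - a * q ^ (n + 1)) *
        qHypergeomCoeff q (q ^ (n + 1))⁻¹ (a * b * q ^ (n + 1 + 1)) (a * q) (j + 1) =
      (1 - a * b * q ^ (2 * n + 2)) *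
          qHypergeomCoeff q (q ^ n)⁻¹ (a * (q * b) * q ^ (n + 1)) (a * q) (j + 1) -
        (1 - a * b * q ^ (2 * n + 2)) * b *
          qHypergeomCoeff q (q ^ n)⁻¹ (a * (q * b) * q ^ (n + 1)) (a * q) j -
        (1 - b * q ^ (n + 1)) *
          qHypergeomCoeff q (q ^ n)⁻¹ (a * b * q ^ (n + 1)) (a * q) (j + 1) := by
  have hα : (q ^ (n + 1))⁻¹ * q = (q ^ n)⁻¹ := by field_simp; ring
  have hβ : a * b * q ^ (n + 1 + 1) = a * (q * b) * q ^ (n + 1) := by ring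
  have hβ' : a * b * q ^ (n + 1) * q = a * (q * b) * q ^ (n + 1) := by ring
  rw [qHypergeomCoeff_succ_of_mul_left, hα, hβ, qHypergeomCoeff_succ,
    qHypergeomCoeff_succ_of_mul_right, hβ']
  generalize qHypergeomCoeff q (q ^ n)⁻¹ (a * (q * b) * q ^ (n + 1)) (a * q) j = c
  field_simp
  ring

theorem littleQJacobi_contiguous_IV_polynomial (hq0 : 0 < q) (hq1 : q < 1)
    (ha : ∀ j : ℕ, 1 ≤ j → j ≤ n + 1 → a * q ^ j ≠ 1) :
    C (b * q ^ (n + 1) * (1 - a * q ^ (n + 1))) * littleQJacobi q a b (n + 1) =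
      C (1 - a * b * q ^ (2 * n + 2)) * (1 - C (q * b) * X) * littleQJacobi q a (q * b) n -
        C (1 - b * q ^ (n + 1)) * littleQJacobi q a b n := by
  have hq : q ≠ 0 := hq0.ne'
  rw [mul_assoc (C (1 - _)), sub_mul, one_mul, mul_assoc (C (q * b)) X]
  ext (_ | j)
  · simp only [coeff_sub, coeff_C_mul, coeff_X_mul_zero, littleQJacobi_coeff _ _ _ hq,
      qHypergeomCoeff_zero, pow_zero]
    ring
  · simp only [coeff_sub, coeff_C_mul, coeff_X_mul, littleQJacobi_coeff _ _ _ hq]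
    rcases le_or_gt j n with hj | hj
    · have haj : 1 - a * q * q ^ j ≠ 0 := by
        rw [sub_ne_zero, mul_assoc, ← pow_succ']
        exact (ha (j + 1) (by omega) (by omega)).symm
      have hqj : 1 - q * q ^ j ≠ 0 := by
        rw [sub_ne_zero, ← pow_succ']
        exact (pow_lt_one₀ hq0.le hq1 j.succ_ne_zero).ne'
      linear_combination q ^ (j + 1) * qHypergeomCoeff_contiguous a b n hq j haj hqj
    · simp [qHypergeomCoeff, qPoch_inv_pow_eq_zero hq, hj, hj.trans j.lt_succ_self]

end LittleQJacobi

/-- contiguous relation IV: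
`b q^{n+1}(1 − a q^{n+1}) p_{n+1}(x; a, b)
  = (1 − a b q^{2n+2})(1 − q b x) p_n(x; a, qb) − (1 − b q^{n+1}) p_n(x; a, b)`. -/
theorem littleQJacobi_contiguous_IV (q a b : ℝ) (n : ℕ)
    (hq0 : 0 < q) (hq1 : q < 1)
    (ha : ∀ j : ℕ, 1 ≤ j → j ≤ n + 1 → a * q ^ j ≠ 1) :
    ∀ x : ℝ,
      b * q ^ (n + 1) * (1 - a * q ^ (n + 1)) * (littleQJacobi q a b (n + 1)).eval x =
        (1 - a * b * q ^ (2 * n + 2)) * (1 - q * b * x) *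
            (littleQJacobi q a (q * b) n).eval x -
          (1 - b * q ^ (n + 1)) * (littleQJacobi q a b n).eval x := by
  intro x
  simpa using congrArg (eval x) (littleQJacobi_contiguous_IV_polynomial a b n hq0 hq1 ha)
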